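/- Let S(t) = e^{tA} for a bounded operator A on a Hilbert space H, and B ∈ L(U, H). If the closure of span{A^m B u : u ∈ U, m ∈ ℕ} equals H, then the only φ ∈ H with B* e^{tA*} φ = 0 for all t in some nontrivial interval [t₀, b] is φ = 0. -/

import Mathlib

set_option maxHeartbeats 1000000
set_option synthInstance.maxHeartbeats 500000
open NormedSpace ContinuousLinearMap

theorem stmt_13 {H U : Type*}
    [NormedAddCommGroup H] [InnerProductSpace ℝ H] [CompleteSpace H]
    [NormedAddCommGroup U] [InnerProductSpace ℝ U] [CompleteSpace U]
    (A : H →L[ℝ] H) (B : U →L[ℝ] H) (t₀ b : ℝ) (htb : t₀ < b)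
    (hspan : (Submodule.span ℝ
        {x : H | ∃ (m : ℕ) (u : U), (A ^ m) (B u) = x}).topologicalClosure = ⊤) :
    ∀ φ : H, (∀ t ∈ Set.Icc t₀ b,
        (ContinuousLinearMap.adjoint B)
          ((NormedSpace.exp (t • ContinuousLinearMap.adjoint A)) φ) = 0) → φ = 0 := by
  intro φ hφ
  set x := ContinuousLinearMap.adjoint A with hx
  -- f m t = ⟨B u, x^m (exp (t•x) φ)⟩
  have key : ∀ (u : U) (m : ℕ), ∀ t ∈ Set.Icc t₀ b,
      (inner ℝ (B u) ((x ^ m) (exp (t • x) φ)) : ℝ) = 0 := by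
    intro u m
    induction m with
    | zero =>
      intro t ht
      have h0 : (inner ℝ u ((ContinuousLinearMap.adjoint B) (exp (t • x) φ)) : ℝ) = 0 := by
        rw [hφ t ht, inner_zero_right]
      rw [ContinuousLinearMap.adjoint_inner_right] at h0
      simpa using h0
    | succ m ih =>
      intro t ht
      -- derivative of f m at t is f (m+1) t
      have hder : ∀ s : ℝ, HasDerivAt
          (fun s : ℝ => (inner ℝ (B u) ((x ^ m) (exp (s • x) φ)) : ℝ))
          (inner ℝ (B u) ((x ^ (m + 1)) (exp (s • x) φ)) : ℝ) s := by
        intro s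
        have h1 : HasDerivAt (fun s : ℝ => exp (s • x))
            (exp (s • x) * x) s := hasDerivAt_exp_smul_const x s
        have h2 := (((innerSL ℝ (B u)).comp
            ((x ^ m).comp ((ContinuousLinearMap.apply ℝ H φ)))).hasFDerivAt).comp_hasDerivAt s h1
        simp only [ContinuousLinearMap.coe_comp', Function.comp_apply,
          ContinuousLinearMap.apply_apply, innerSL_apply_apply] at h2
        have hc : Commute (exp (s • x)) x :=
          ((Commute.refl x).smul_left s).exp_left
        have h3 : (exp (s • x) * x) φ = x (exp (s • x) φ) := by
          rw [hc.eq]; rfl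
        have h4 : (x ^ m) ((exp (s • x) * x) φ)
            = (x ^ (m + 1)) (exp (s • x) φ) := by
          rw [h3, pow_succ, ContinuousLinearMap.mul_apply]
        rw [h4] at h2
        exact h2
      -- f m vanishes on Icc, so its derivative vanishes there too
      have hzero : HasDerivWithinAt
          (fun s : ℝ => (inner ℝ (B u) ((x ^ m) (exp (s • x) φ)) : ℝ))
          0 (Set.Icc t₀ b) t := by
        apply (hasDerivWithinAt_const t (Set.Icc t₀ b) (0:ℝ)).congr
        · intro s hs; exact ih s hs
        · exact ih t ht
      have huniq : UniqueDiffWithinAt ℝ (Set.Icc t₀ b) t :=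
        (uniqueDiffOn_Icc htb) t ht
      have := huniq.eq_deriv _ ((hder t).hasDerivWithinAt) hzero
      rw [this]
  -- conclude: exp(t₀•x) φ ⊥ span generators
  set ψ := exp (t₀ • x) φ with hψ
  have horth : ψ ∈ (Submodule.span ℝ
      {y : H | ∃ (m : ℕ) (u : U), (A ^ m) (B u) = y})ᗮ := by
    rw [Submodule.mem_orthogonal]
    intro y hy
    refine Submodule.span_induction ?_ ?_ ?_ ?_ hy
    · rintro z ⟨m, u, rfl⟩
      have hadj : ∀ k : ℕ, ContinuousLinearMap.adjoint (x ^ k) = A ^ k := by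
        intro k
        induction k with
        | zero => simp only [pow_zero]; exact ContinuousLinearMap.adjoint_id
        | succ k ihk =>
          rw [pow_succ, pow_succ', ContinuousLinearMap.mul_def,
            ContinuousLinearMap.adjoint_comp, ihk, hx,
            ContinuousLinearMap.adjoint_adjoint, ← ContinuousLinearMap.mul_def]
      have hm : ((A : H →L[ℝ] H) ^ m) (B u) = (ContinuousLinearMap.adjoint (x ^ m)) (B u) := by
        rw [hadj]
      rw [hm, ContinuousLinearMap.adjoint_inner_left]
      exact key u m t₀ ⟨le_refl _, le_of_lt htb⟩
    · simp
    · intro a c _ _ ha hc; rw [inner_add_left, ha, hc, add_zero]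
    · intro r a _ ha; rw [inner_smul_left, ha, mul_zero]
  have hψ0 : ψ = 0 := by
    have hbot : (Submodule.span ℝ
        {y : H | ∃ (m : ℕ) (u : U), (A ^ m) (B u) = y})ᗮ = ⊥ :=
      Submodule.topologicalClosure_eq_top_iff.mp hspan
    rw [hbot] at horth
    simpa using horth
  -- invert the exponential
  have : φ = exp ((-t₀) • x) ψ := by
    rw [hψ, ← ContinuousLinearMap.mul_apply, ← exp_add_of_commute_of_mem_ball (𝕂 := ℝ) (𝔸 := H →L[ℝ] H)
      (((Commute.refl x).smul_left (-t₀)).smul_right t₀)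
      ((expSeries_radius_eq_top ℝ (H →L[ℝ] H)).symm ▸ edist_lt_top _ _)
      ((expSeries_radius_eq_top ℝ (H →L[ℝ] H)).symm ▸ edist_lt_top _ _)]
    simp
  rw [this, hψ0, map_zero]
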